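/- Let G be the dihedral group of order 8, W the 7-dimensional sum-zero subrepresentation of its complex left regular representation, Sym²W its symmetric square, and χ₃ : G → ℂ the character with χ₃(r^i) = (−1)^i and χ₃(s r^i) = (−1)^{i+1}. Then the complex vector space of linear maps f : Sym²W → ℂ satisfying f(g • x) = χ₃(g) · f(x) for all g ∈ G and x ∈ Sym²W has dimension 4. -/

import Mathlib

open scoped TensorProduct

set_option synthInstance.maxHeartbeats 1000000
set_option maxHeartbeats 1000000

/-- The left regular action of `g` on functions `DihedralGroup 4 → ℂ`:
`(reg g f) x = f (g⁻¹ * x)`. -/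
noncomputable def reg (g : DihedralGroup 4) :
    (DihedralGroup 4 → ℂ) →ₗ[ℂ] (DihedralGroup 4 → ℂ) :=
  LinearMap.funLeft ℂ ℂ (fun x => g⁻¹ * x)

/-- The subspace of sum-zero functions: the regular representation minus the
trivial representation; it is 7-dimensional. -/
noncomputable def W : Submodule ℂ (DihedralGroup 4 → ℂ) :=
  LinearMap.ker (∑ x : DihedralGroup 4, LinearMap.proj x :
    (DihedralGroup 4 → ℂ) →ₗ[ℂ] ℂ)

lemma reg_mem_W (g : DihedralGroup 4) {f : DihedralGroup 4 → ℂ} (hf : f ∈ W) :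
    reg g f ∈ W := by
  simp only [W, LinearMap.mem_ker, LinearMap.sum_apply, LinearMap.proj_apply] at hf ⊢
  calc ∑ x : DihedralGroup 4, reg g f x
      = ∑ x : DihedralGroup 4, f x :=
        Fintype.sum_equiv (Equiv.mulLeft g⁻¹) _ _ (fun x => rfl)
    _ = 0 := hf

/-- The action of `g` on `W`. -/
noncomputable def regW (g : DihedralGroup 4) : W →ₗ[ℂ] W :=
  (reg g).restrict (fun _ hf => reg_mem_W g hf)

noncomputable instance : AddCommGroup (↥W ⊗[ℂ] ↥W) := TensorProduct.addCommGroup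

/-- The diagonal action of `g` on `W ⊗ W`. -/
noncomputable def tenAct (g : DihedralGroup 4) : (↥W ⊗[ℂ] ↥W) →ₗ[ℂ] (↥W ⊗[ℂ] ↥W) :=
  TensorProduct.map (regW g) (regW g)

/-- The subspace of `W ⊗ W` spanned by the elements `x ⊗ y - y ⊗ x`. -/
noncomputable def symRel : Submodule ℂ (↥W ⊗[ℂ] ↥W) :=
  Submodule.span ℂ {z | ∃ x y : W, z = x ⊗ₜ[ℂ] y - y ⊗ₜ[ℂ] x}

/-- The symmetric square `Sym² W`: the quotient of `W ⊗ W` by the span of the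
elements `x ⊗ y - y ⊗ x`. -/
noncomputable abbrev Sym2W : Type := (↥W ⊗[ℂ] ↥W) ⧸ symRel

lemma symRel_le (g : DihedralGroup 4) : symRel ≤ symRel.comap (tenAct g) := by
  rw [symRel, Submodule.span_le]
  rintro z ⟨x, y, rfl⟩
  simp only [Submodule.mem_comap, map_sub, tenAct, TensorProduct.map_tmul]
  exact Submodule.subset_span ⟨regW g x, regW g y, rfl⟩

/-- The induced action of `g` on `Sym² W`. -/
noncomputable def symAct (g : DihedralGroup 4) : Sym2W →ₗ[ℂ] Sym2W :=
  Submodule.mapQ symRel symRel (tenAct g) (symRel_le g)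

/-- The space of `χ`-equivariant linear functionals on `Sym² W`. -/
noncomputable def eqMaps (χ : DihedralGroup 4 → ℂ) : Submodule ℂ (Sym2W →ₗ[ℂ] ℂ) where
  carrier := {f | ∀ (g : DihedralGroup 4) (x : Sym2W), f (symAct g x) = χ g * f x}
  add_mem' := by
    intro a b ha hb g x
    simp only [LinearMap.add_apply, ha g x, hb g x]
    ring
  zero_mem' := by
    intro g x
    simp
  smul_mem' := by
    intro c f hf g x
    simp only [LinearMap.smul_apply, hf g x, smul_eq_mul]
    ring

/-- The character of `DihedralGroup 4` with `χ₃(r^i) = (-1)^i` and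
`χ₃(s r^i) = (-1)^(i+1)`. -/
noncomputable def chi3 : DihedralGroup 4 → ℂ
  | .r i => (-1) ^ i.val
  | .sr i => (-1) ^ (i.val + 1)


/-!
A `χ`-equivariant functional on `Sym² W` is a symmetric bilinear form `B` on `W` with
`B (g x) (g y) = χ g * B x y`. On the vectors `e_a = δ_a - 1/8`, which span `W` and sum to
zero, equivariance forces `B e_a e_b = χ a * m (a⁻¹ * b)` with `m b = B e_1 e_b`; symmetry and
`∑ e_a = 0` become `m c = χ c * m c⁻¹` and `∑ m = 0`. Conversely every such `m` comes from the
form on `DihedralGroup 4 → ℂ` with Gram matrix `χ a * m (a⁻¹ * b)`: its row sums vanish, so it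
does not see the constants and restricts to `W` without loss. For `χ₃` these conditions kill
`m (s r⁰)` and `m (s r²)`, tie `m r³` to `m r¹` and impose one relation among the rest,
leaving four free values.
-/

open Matrix

theorem DihedralGroup.sum_univ {n : ℕ} [NeZero n] {M : Type*} [AddCommMonoid M]
    (f : DihedralGroup n → M) :
    ∑ g, f g = ∑ i, f (DihedralGroup.r i) + ∑ i, f (DihedralGroup.sr i) :=
  (Fintype.sum_equiv DihedralGroup.equivSum _ (Sum.elim (f ∘ .r) (f ∘ .sr))
    (by rintro (i | i) <;> rfl)).trans (Fintype.sum_sum_type _)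

section TwistedKernel

variable {G k : Type*} [Group G] [CommRing k]

def twistedKernel (χ : G → k) (m : G → k) : Matrix G G k :=
  Matrix.of fun a b => χ a * m (a⁻¹ * b)

@[simp]
lemma twistedKernel_apply (χ : G → k) (m : G → k) (a b : G) :
    twistedKernel χ m a b = χ a * m (a⁻¹ * b) := rfl

lemma twistedKernel_mulVec_const [Fintype G] (χ m : G → k) (hm : ∑ c, m c = 0) (t : k) :
    twistedKernel χ m *ᵥ (fun _ => t) = 0 := by
  ext a
  simp only [mulVec, dotProduct, twistedKernel_apply, Pi.zero_apply, ← Finset.sum_mul,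
    ← Finset.mul_sum]
  rw [Fintype.sum_equiv (Equiv.mulLeft a⁻¹) (fun b => m (a⁻¹ * b)) m (fun _ => rfl), hm,
    mul_zero, zero_mul]

variable (χ : G →* k) (m : G → k)

lemma twistedKernel_mul_mul (g a b : G) :
    twistedKernel χ m (g * a) (g * b) = χ g * twistedKernel χ m a b := by
  simp [mul_assoc]

lemma isSymm_toBilin'_twistedKernel [Fintype G] [DecidableEq G]
    (hm : ∀ c, m c = χ c * m c⁻¹) : (twistedKernel χ m).toBilin'.IsSymm := by
  refine Matrix.isSymm_toBilin'_iff_isSymm.2 (Matrix.IsSymm.ext fun a b => ?_)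
  rw [twistedKernel_apply, twistedKernel_apply, hm (b⁻¹ * a), ← mul_assoc, ← map_mul]
  simp

end TwistedKernel

lemma mem_W_iff {f : DihedralGroup 4 → ℂ} : f ∈ W ↔ ∑ x, f x = 0 := by
  simp [W]

/-- The orthogonal projection of `δ_a` to `W`. -/
noncomputable def centeredSingle (a : DihedralGroup 4) : W :=
  ⟨Pi.single a 1 - fun _ => 8⁻¹, by
    rw [mem_W_iff]
    simp [Finset.sum_sub_distrib, DihedralGroup.card]⟩

lemma coe_centeredSingle (a : DihedralGroup 4) :
    (centeredSingle a : DihedralGroup 4 → ℂ) = Pi.single a 1 - fun _ => 8⁻¹ := rfl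

lemma regW_centeredSingle (g a : DihedralGroup 4) :
    regW g (centeredSingle a) = centeredSingle (g * a) := by
  ext x
  simp [regW, reg, coe_centeredSingle, LinearMap.funLeft_apply, Pi.single_apply,
    inv_mul_eq_iff_eq_mul]

lemma sum_centeredSingle : ∑ a, centeredSingle a = 0 := by
  ext x
  simp [coe_centeredSingle, Finset.sum_sub_distrib, DihedralGroup.card]

lemma span_centeredSingle : Submodule.span ℂ (Set.range centeredSingle) = ⊤ := by
  refine eq_top_iff.2 fun w _ => ?_
  have hw : w = ∑ a, (w : DihedralGroup 4 → ℂ) a • centeredSingle a := by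
    ext x
    have hsum := mem_W_iff.1 w.2
    simp [coe_centeredSingle, mul_sub, Finset.sum_sub_distrib, ← Finset.sum_mul, hsum,
      Pi.single_apply]
  rw [hw]
  exact Submodule.sum_mem _ fun a _ =>
    Submodule.smul_mem _ _ (Submodule.subset_span ⟨a, rfl⟩)

noncomputable def symMul (x y : W) : Sym2W := symRel.mkQ (x ⊗ₜ[ℂ] y)

lemma symMul_comm (x y : W) : symMul x y = symMul y x :=
  (Submodule.Quotient.eq _).2 (Submodule.subset_span ⟨x, y, rfl⟩)

lemma symAct_symMul (g : DihedralGroup 4) (x y : W) :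
    symAct g (symMul x y) = symMul (regW g x) (regW g y) := rfl

lemma Sym2W.ext_centeredSingle {f f' : Sym2W →ₗ[ℂ] ℂ}
    (h : ∀ a b, f (symMul (centeredSingle a) (centeredSingle b)) =
      f' (symMul (centeredSingle a) (centeredSingle b))) : f = f' := by
  refine Submodule.linearMap_qext _ (TensorProduct.curry_injective ?_)
  refine LinearMap.ext_on span_centeredSingle ?_
  rintro _ ⟨a, rfl⟩
  refine LinearMap.ext_on span_centeredSingle ?_
  rintro _ ⟨b, rfl⟩
  exact h a b

/-- The possible first rows `b ↦ f (e_1 · e_b)` of `χ`-equivariant functionals `f`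
on `Sym² W`. -/
def symKernels (χ : DihedralGroup 4 → ℂ) : Submodule ℂ (DihedralGroup 4 → ℂ) where
  carrier := {m | (∀ c, m c = χ c * m c⁻¹) ∧ ∑ c, m c = 0}
  add_mem' := by
    rintro m m' ⟨hm, hsum⟩ ⟨hm', hsum'⟩
    refine ⟨fun c => ?_, ?_⟩
    · simp only [Pi.add_apply, hm c, hm' c, mul_add]
    · simp [Finset.sum_add_distrib, hsum, hsum']
  zero_mem' := by simp
  smul_mem' := by
    rintro t m ⟨hm, hsum⟩
    refine ⟨fun c => ?_, ?_⟩
    · simp only [Pi.smul_apply, smul_eq_mul, hm c]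
      ring
    · simp [← Finset.mul_sum, hsum]

noncomputable def firstRow : (Sym2W →ₗ[ℂ] ℂ) →ₗ[ℂ] DihedralGroup 4 → ℂ :=
  LinearMap.pi fun b => LinearMap.applyₗ (symMul (centeredSingle 1) (centeredSingle b))

lemma firstRow_apply (f : Sym2W →ₗ[ℂ] ℂ) (b : DihedralGroup 4) :
    firstRow f b = f (symMul (centeredSingle 1) (centeredSingle b)) := rfl

lemma apply_symMul_centeredSingle {χ : DihedralGroup 4 → ℂ} {f : Sym2W →ₗ[ℂ] ℂ}
    (hf : f ∈ eqMaps χ) (a b : DihedralGroup 4) :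
    f (symMul (centeredSingle a) (centeredSingle b)) = χ a * firstRow f (a⁻¹ * b) := by
  rw [firstRow_apply, ← hf a, symAct_symMul, regW_centeredSingle, regW_centeredSingle, mul_one,
    mul_inv_cancel_left]

lemma firstRow_mem {χ : DihedralGroup 4 → ℂ} {f : Sym2W →ₗ[ℂ] ℂ} (hf : f ∈ eqMaps χ) :
    firstRow f ∈ symKernels χ := by
  refine ⟨fun c => ?_, ?_⟩
  · rw [firstRow_apply, symMul_comm, apply_symMul_centeredSingle hf, mul_one]
  · calc ∑ c, firstRow f c
        = (f ∘ₗ symRel.mkQ ∘ₗ TensorProduct.mk ℂ W W (centeredSingle 1))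
            (∑ c, centeredSingle c) := by simp [map_sum, firstRow_apply, symMul]
      _ = 0 := by rw [sum_centeredSingle, map_zero]

section SymForm

variable {χ : DihedralGroup 4 →* ℂ} {m : DihedralGroup 4 → ℂ}

noncomputable def symForm (hm : m ∈ symKernels χ) : Sym2W →ₗ[ℂ] ℂ :=
  symRel.liftQ
    (TensorProduct.lift ((twistedKernel χ m).toBilin'.comp W.subtype W.subtype)) <| by
    rw [symRel, Submodule.span_le]
    rintro _ ⟨x, y, rfl⟩
    simp [(isSymm_toBilin'_twistedKernel χ m hm.1).eq (x : DihedralGroup 4 → ℂ)]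

lemma symForm_symMul (hm : m ∈ symKernels χ) (x y : W) :
    symForm hm (symMul x y) = (twistedKernel χ m).toBilin' x y := rfl

lemma symForm_centeredSingle (hm : m ∈ symKernels χ) (a b : DihedralGroup 4) :
    symForm hm (symMul (centeredSingle a) (centeredSingle b)) = twistedKernel χ m a b := by
  have hconst (x : DihedralGroup 4 → ℂ) :
      (twistedKernel χ m).toBilin' x (fun _ => 8⁻¹) = 0 := by
    rw [Matrix.toBilin'_apply', twistedKernel_mulVec_const χ m hm.2, dotProduct_zero]
  rw [symForm_symMul, coe_centeredSingle, coe_centeredSingle, map_sub, hconst, sub_zero,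
    LinearMap.map_sub₂, (isSymm_toBilin'_twistedKernel χ m hm.1).eq (fun _ => 8⁻¹), hconst,
    sub_zero, Matrix.toBilin'_single]

lemma symForm_mem (hm : m ∈ symKernels χ) : symForm hm ∈ eqMaps χ := by
  intro g x
  refine LinearMap.congr_fun (f := symForm hm ∘ₗ symAct g) (g := χ g • symForm hm)
    (Sym2W.ext_centeredSingle fun a b => ?_) x
  simp only [LinearMap.comp_apply, LinearMap.smul_apply, smul_eq_mul, symAct_symMul,
    regW_centeredSingle, symForm_centeredSingle, twistedKernel_mul_mul]

lemma firstRow_symForm (hm : m ∈ symKernels χ) : firstRow (symForm hm) = m := by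
  ext b
  simp [firstRow_apply, symForm_centeredSingle]

end SymForm

noncomputable def eqMapsEquivSymKernels (χ : DihedralGroup 4 →* ℂ) :
    eqMaps χ ≃ₗ[ℂ] symKernels χ :=
  LinearEquiv.ofBijective
    ((firstRow ∘ₗ (eqMaps χ).subtype).codRestrict _ fun f => firstRow_mem f.2)
    ⟨fun f f' h => Subtype.ext <| Sym2W.ext_centeredSingle fun a b => by
        rw [apply_symMul_centeredSingle f.2, apply_symMul_centeredSingle f'.2]
        exact congrArg (fun m : symKernels χ => χ a * (m : DihedralGroup 4 → ℂ) (a⁻¹ * b)) h,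
      fun m => ⟨⟨symForm m.2, symForm_mem m.2⟩, Subtype.ext (firstRow_symForm m.2)⟩⟩

/-- `χ₃` with values in `ℤˣ`, where multiplicativity is decidable. -/
def chi3Units : DihedralGroup 4 →* ℤˣ where
  toFun
    | .r i => (-1) ^ i.val
    | .sr i => (-1) ^ (i.val + 1)
  map_one' := rfl
  map_mul' := by decide

noncomputable def chi3Hom : DihedralGroup 4 →* ℂ :=
  (Int.castRingHom ℂ).toMonoidHom.comp ((Units.coeHom ℤ).comp chi3Units)

lemma coe_chi3Hom : ⇑chi3Hom = chi3 := by
  ext (i | i)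
  · change ((((-1 : ℤˣ) ^ i.val : ℤˣ) : ℤ) : ℂ) = _
    simp [chi3]
  · change ((((-1 : ℤˣ) ^ (i.val + 1) : ℤˣ) : ℤ) : ℂ) = _
    simp [chi3]

namespace DihedralGroup

lemma sum_univ_four {M : Type*} [AddCommMonoid M] (f : DihedralGroup 4 → M) :
    ∑ g, f g =
      f (r 0) + f (r 1) + f (r 2) + f (r 3) + (f (sr 0) + f (sr 1) + f (sr 2) + f (sr 3)) :=
  (sum_univ f).trans (congrArg₂ (· + ·) (Fin.sum_univ_four _) (Fin.sum_univ_four _))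

lemma cases_four (g : DihedralGroup 4) : g = r 0 ∨ g = r 1 ∨ g = r 2 ∨ g = r 3 ∨
    g = sr 0 ∨ g = sr 1 ∨ g = sr 2 ∨ g = sr 3 := by
  revert g
  decide

end DihedralGroup

open DihedralGroup

lemma mem_symKernels_chi3 {m : DihedralGroup 4 → ℂ} : m ∈ symKernels chi3 ↔
    m (r 3) = -m (r 1) ∧ m (sr 0) = 0 ∧ m (sr 2) = 0 ∧
      m (r 0) + m (r 2) + m (sr 1) + m (sr 3) = 0 := by
  obtain ⟨hn1, hn2, hn3⟩ : (-1 : ZMod 4) = 3 ∧ (-2 : ZMod 4) = 2 ∧ (-3 : ZMod 4) = 1 := by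
    decide
  have hval : (1 : ZMod 4).val = 1 := rfl
  change (∀ c, _) ∧ _ ↔ _
  rw [sum_univ_four]
  constructor
  · rintro ⟨h, hsum⟩
    have h3 := h (r 3)
    have h0 := h (sr 0)
    have h2 := h (sr 2)
    simp only [inv_r, inv_sr, hn3] at h3 h0 h2
    norm_num [chi3, ZMod.val_ofNat, self_eq_neg] at h3 h0 h2
    exact ⟨h3, h0, h2, by linear_combination hsum - h3 - h0 - h2⟩
  · rintro ⟨h3, h0, h2, hsum⟩
    refine ⟨fun c => ?_, by linear_combination hsum + h3 + h0 + h2⟩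
    rcases cases_four c with rfl | rfl | rfl | rfl | rfl | rfl | rfl | rfl <;>
      simp only [inv_r, inv_sr, hn1, hn2, hn3, neg_zero] <;>
      norm_num [chi3, ZMod.val_ofNat, hval, h3, h0, h2]

lemma eq_zero_of_mem_symKernels_chi3 {m : DihedralGroup 4 → ℂ} (hm : m ∈ symKernels chi3)
    (hr1 : m (r 1) = 0) (hr2 : m (r 2) = 0) (hsr1 : m (sr 1) = 0) (hsr3 : m (sr 3) = 0) :
    m = 0 := by
  obtain ⟨hr3, hsr0, hsr2, hsum⟩ := mem_symKernels_chi3.1 hm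
  rw [hr1, neg_zero] at hr3
  rw [hr2, hsr1, hsr3, add_zero, add_zero, add_zero] at hsum
  ext g
  rcases cases_four g with rfl | rfl | rfl | rfl | rfl | rfl | rfl | rfl <;> assumption

noncomputable def symKernelsChi3Coords : symKernels chi3 →ₗ[ℂ] Fin 4 → ℂ :=
  LinearMap.pi (fun i => LinearMap.proj (![r 1, r 2, sr 1, sr 3] i)) ∘ₗ
    (symKernels chi3).subtype

lemma symKernelsChi3Coords_injective : Function.Injective symKernelsChi3Coords :=
  (injective_iff_map_eq_zero _).2 fun m hm => Subtype.ext <|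
    eq_zero_of_mem_symKernels_chi3 m.2 (congrFun hm 0) (congrFun hm 1) (congrFun hm 2)
      (congrFun hm 3)

lemma symKernelsChi3Coords_surjective : Function.Surjective symKernelsChi3Coords := by
  intro v
  let m : DihedralGroup 4 → ℂ :=
    v 0 • (Pi.single (r 1) 1 - Pi.single (r 3) 1) +
      v 1 • (Pi.single (r 2) 1 - Pi.single (r 0) 1) +
      v 2 • (Pi.single (sr 1) 1 - Pi.single (r 0) 1) +
      v 3 • (Pi.single (sr 3) 1 - Pi.single (r 0) 1)
  have hm : m ∈ symKernels chi3 := mem_symKernels_chi3.2 <| by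
    simp +decide [m]
    ring
  refine ⟨⟨m, hm⟩, funext fun i => ?_⟩
  fin_cases i <;> simp +decide [symKernelsChi3Coords, m]

lemma finrank_symKernels_chi3 : Module.finrank ℂ (symKernels chi3) = 4 := by
  rw [LinearEquiv.finrank_eq (LinearEquiv.ofBijective _
    ⟨symKernelsChi3Coords_injective, symKernelsChi3Coords_surjective⟩), Module.finrank_fin_fun]

/-- The multiplicity of the character `χ₃` in `Sym² W` is 4. -/
theorem finrank_eqMaps_chi3_eq_four : Module.finrank ℂ (eqMaps chi3) = 4 := by
  rw [← coe_chi3Hom, (eqMapsEquivSymKernels chi3Hom).finrank_eq, coe_chi3Hom,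
    finrank_symKernels_chi3]
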